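/- arXiv:2601.02542 — 2 statements merged into one kernel-verified Lean document; each statement's English description precedes it below -/
import Mathlib

section
/- Let a ≤ b and a' ≤ b' be integers such that the segments S = Finset.Icc a b and T = Finset.Icc a' b' are linked, i.e. neither is contained in the other and their union is an integer interval. Then the means of the two segments differ by at least 1: |((a + b) : ℚ)/2 − ((a' + b') : ℚ)/2| ≥ 1. -/
/-- If two nonempty integer segments `Finset.Icc a b` and `Finset.Icc a' b'` are linked
(neither contained in the other, and their union is again an integer interval), then their
means differ by at least `1`. -/
theorem linked_means_differ (a b a' b' : ℤ) (hab : a ≤ b) (hab' : a' ≤ b')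
    (h1 : ¬ Finset.Icc a b ⊆ Finset.Icc a' b')
    (h2 : ¬ Finset.Icc a' b' ⊆ Finset.Icc a b)
    (h3 : ∃ a'' b'' : ℤ, Finset.Icc a b ∪ Finset.Icc a' b' = Finset.Icc a'' b'') :
    |((a : ℚ) + (b : ℚ)) / 2 - ((a' : ℚ) + (b' : ℚ)) / 2| ≥ 1 := by
  rw [Finset.not_subset] at h1 h2
  obtain ⟨x, hx, hx'⟩ := h1
  obtain ⟨y, hy, hy'⟩ := h2
  simp only [Finset.mem_Icc, not_and, not_le] at hx hx' hy hy'
  have key : (a' + b' : ℤ) ≥ a + b + 2 ∨ (a + b : ℤ) ≥ a' + b' + 2 := by omega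
  rw [ge_iff_le, le_abs]
  rcases key with h | h
  · right
    have : (a' + b' : ℚ) ≥ (a : ℚ) + b + 2 := by exact_mod_cast h
    linarith
  · left
    have : (a + b : ℚ) ≥ (a' : ℚ) + b' + 2 := by exact_mod_cast h
    linarith
end

section
/- For n ∈ ℕ, let M(n) denote the set of pairs (c, i) where c = (n₁, …, n_m) is a composition of n into positive integer parts (the empty composition when n = 0) and 1 ≤ i ≤ m is a marked index. Then the map that sends a pair (c, i₀) with c a composition of n of length m and 1 ≤ i₀ ≤ m to the marked composition of n+1 obtained by incrementing the i₀-th part by 1 and marking it, and the map that sends a pair (c, i₀) with 1 ≤ i₀ ≤ m+1 to the marked composition of n+1 obtained by inserting a new part equal to 1 at position i₀ and marking it, together define a bijection from the disjoint union { (c, i₀) : c composition of n of length m, 1 ≤ i₀ ≤ m } ⊔ { (c, i₀) : c composition of n of length m, 1 ≤ i₀ ≤ m+1 } onto M(n+1). -/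
/-- A composition of `n`: a finite sequence of positive integers summing to `n`
(the empty composition when `n = 0`). -/
structure CompS (n : ℕ) where
  m : ℕ
  d : Fin m → ℕ
  pos : ∀ i, 0 < d i
  sum_eq : ∑ i, d i = n

/-- A marked composition of `n`: a composition together with a marked index. -/
structure MarkedComp (n : ℕ) where
  m : ℕ
  d : Fin m → ℕ
  pos : ∀ i, 0 < d i
  sum_eq : ∑ i, d i = n
  mark : Fin m

/-- Increment the `i₀`-th part of a composition of `n` by `1` and mark it, producing a
marked composition of `n + 1`. -/
def incrMark (n : ℕ) (x : Σ c : CompS n, Fin c.m) : MarkedComp (n + 1) where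
  m := x.1.m
  d := Function.update x.1.d x.2 (x.1.d x.2 + 1)
  pos := by
    intro j
    rcases eq_or_ne j x.2 with h | h
    · subst h
      simp only [Function.update_self]
      omega
    · rw [Function.update_of_ne h]
      exact x.1.pos j
  sum_eq := by
    have h1 : ∑ i, Function.update x.1.d x.2 (x.1.d x.2 + 1) i
        = x.1.d x.2 + 1 + ∑ i ∈ Finset.univ \ {x.2}, x.1.d i :=
      Finset.sum_update_of_mem (Finset.mem_univ _) x.1.d (x.1.d x.2 + 1)
    have h2 : (Finset.univ \ {x.2} : Finset (Fin x.1.m)) = Finset.univ.erase x.2 :=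
      Finset.sdiff_singleton_eq_erase _ _
    have h3 : x.1.d x.2 + ∑ i ∈ Finset.univ.erase x.2, x.1.d i = ∑ i, x.1.d i :=
      Finset.add_sum_erase _ _ (Finset.mem_univ _)
    have h4 := x.1.sum_eq
    rw [h2] at h1
    omega
  mark := x.2

/-- Insert a new part equal to `1` at position `i₀` in a composition of `n` and mark it,
producing a marked composition of `n + 1`. -/
def insMark (n : ℕ) (x : Σ c : CompS n, Fin (c.m + 1)) : MarkedComp (n + 1) where
  m := x.1.m + 1
  d := Fin.insertNth x.2 1 x.1.d
  pos := by
    intro j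
    rcases eq_or_ne j x.2 with h | h
    · subst h
      simp
    · obtain ⟨i, rfl⟩ := Fin.exists_succAbove_eq h
      rw [Fin.insertNth_apply_succAbove]
      exact x.1.pos i
  sum_eq := by
    rw [Fin.sum_univ_succAbove _ x.2]
    simp only [Fin.insertNth_apply_same, Fin.insertNth_apply_succAbove]
    have := x.1.sum_eq
    omega
  mark := x.2

/-- The combined map from the disjoint union of `{(c, i₀) : c a composition of n, i₀ a part}`
and `{(c, i₀) : c a composition of n, i₀ a gap position}` to marked compositions of `n+1`. -/
def markedOfEither (n : ℕ) :
    ((Σ c : CompS n, Fin c.m) ⊕ (Σ c : CompS n, Fin (c.m + 1))) → MarkedComp (n + 1)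
  | .inl x => incrMark n x
  | .inr x => insMark n x


/-! Every marked composition of `n + 1` arises in exactly one way: if its marked part is `1`,
delete that part (the new marker records the gap it leaves); otherwise lower the marked part
by `1`. These two operations invert inserting a marked `1` and raising the marked part. -/

open Function

theorem Finset.sum_update_add_self {ι M : Type*} [Fintype ι] [DecidableEq ι] [AddCommMonoid M]
    (f : ι → M) (j : ι) (a : M) : ∑ i, update f j (f j + a) i = ∑ i, f i + a := by
  rw [Finset.sum_update_of_mem (Finset.mem_univ j), Finset.sdiff_singleton_eq_erase,
    add_right_comm, Finset.add_sum_erase _ _ (Finset.mem_univ j)]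

theorem Finset.sum_update_sub_one_add_one {ι : Type*} [Fintype ι] [DecidableEq ι]
    (d : ι → ℕ) {j : ι} (hj : 0 < d j) : ∑ i, update d j (d j - 1) i + 1 = ∑ i, d i := by
  have h := Finset.sum_update_add_self (update d j (d j - 1)) j 1
  rwa [update_self, update_idem, Nat.sub_add_cancel hj, update_eq_self, eq_comm] at h

namespace MarkedComp

variable {n : ℕ}

def decrMark (x : MarkedComp (n + 1)) (h : x.d x.mark ≠ 1) : Σ c : CompS n, Fin c.m :=
  ⟨{ m := x.m
     d := update x.d x.mark (x.d x.mark - 1)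
     pos := fun j => by
       rcases eq_or_ne j x.mark with rfl | hj
       · have := x.pos x.mark
         rw [update_self]
         omega
       · rw [update_of_ne hj]
         exact x.pos j
     sum_eq := by
       have := Finset.sum_update_sub_one_add_one x.d (x.pos x.mark)
       rw [x.sum_eq] at this
       omega }, x.mark⟩

def eraseMark : (x : MarkedComp (n + 1)) → x.d x.mark = 1 → Σ c : CompS n, Fin (c.m + 1)
  | ⟨0, _, _, _, mark⟩, _ => mark.elim0
  | ⟨k + 1, d, pos, sum_eq, mark⟩, h =>
    ⟨{ m := k
       d := mark.removeNth d
       pos := fun _ => pos _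
       sum_eq := by
         have := Fin.sum_univ_succAbove d mark
         rw [sum_eq, show d mark = 1 from h] at this
         unfold Fin.removeNth
         omega }, mark⟩

def unmark (x : MarkedComp (n + 1)) :
    (Σ c : CompS n, Fin c.m) ⊕ (Σ c : CompS n, Fin (c.m + 1)) :=
  if h : x.d x.mark = 1 then .inr (eraseMark x h) else .inl (decrMark x h)

theorem incrMark_d_mark_ne_one (x : Σ c : CompS n, Fin c.m) :
    (incrMark n x).d (incrMark n x).mark ≠ 1 := by
  simp [incrMark, (x.1.pos x.2).ne']

theorem insMark_d_mark (x : Σ c : CompS n, Fin (c.m + 1)) :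
    (insMark n x).d (insMark n x).mark = 1 :=
  Fin.insertNth_apply_same (α := fun _ => ℕ) ..

theorem decrMark_incrMark (x : Σ c : CompS n, Fin c.m)
    (h : (incrMark n x).d (incrMark n x).mark ≠ 1) : decrMark (incrMark n x) h = x := by
  obtain ⟨⟨m, d, pos, sum_eq⟩, i⟩ := x
  dsimp only [decrMark, incrMark]
  congr
  rw [update_idem, update_self, Nat.add_sub_cancel, update_eq_self]

theorem incrMark_decrMark (x : MarkedComp (n + 1)) (h : x.d x.mark ≠ 1) :
    incrMark n (decrMark x h) = x := by
  obtain ⟨m, d, pos, sum_eq, mark⟩ := x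
  dsimp only [decrMark, incrMark]
  congr
  rw [update_idem, update_self, Nat.sub_add_cancel (pos mark), update_eq_self]

theorem eraseMark_insMark (x : Σ c : CompS n, Fin (c.m + 1))
    (h : (insMark n x).d (insMark n x).mark = 1) : eraseMark (insMark n x) h = x := by
  obtain ⟨⟨m, d, pos, sum_eq⟩, i⟩ := x
  dsimp only [eraseMark, insMark]
  congr
  exact Fin.removeNth_insertNth (α := fun _ => ℕ) i 1 d

theorem insMark_eraseMark (x : MarkedComp (n + 1)) (h : x.d x.mark = 1) :
    insMark n (eraseMark x h) = x := by
  obtain ⟨_ | k, d, pos, sum_eq, mark⟩ := x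
  · exact mark.elim0
  · dsimp only [eraseMark, insMark]
    congr
    rw [Fin.insertNth_removeNth, update_eq_self_iff]
    exact h.symm

end MarkedComp

/-- The two maps (incrementing a marked part, or inserting a part equal to `1`) together
define a bijection onto the set of marked compositions of `n + 1`. -/
theorem markedOfEither_bijective (n : ℕ) : Function.Bijective (markedOfEither n) := by
  open MarkedComp in
  refine bijective_iff_has_inverse.mpr ⟨unmark, ?_, fun x => ?_⟩
  · rintro (x | x)
    · rw [markedOfEither, unmark, dif_neg (incrMark_d_mark_ne_one x), decrMark_incrMark]
    · rw [markedOfEither, unmark, dif_pos (insMark_d_mark x), eraseMark_insMark]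
  · rw [unmark]
    split_ifs with h
    · exact insMark_eraseMark x h
    · exact incrMark_decrMark x h
end
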